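/- arXiv:0905.1673 — 2 statements merged into one kernel-verified Lean document; each statement's English description precedes it below -/
import Mathlib

section
/- Game-theoretic Lévy zero-one law: for any prequential event E ⊆ Π, for almost all π ∈ E one has UpProb(E | π^n) → 1 as n → ∞; that is, there exists N ⊆ Π with UpProb(N) = 0 such that this convergence holds for all π ∈ E \ N. -/
open Filter Topology MeasureTheory
open scoped ENNReal NNReal unitInterval

noncomputable section

/-- Finite prequential sequences: finite sequences of pairs (p, y) with p ∈ [0,1], y ∈ {0,1}. -/
abbrev PreqFin := List (unitInterval × Bool)

/-- The prequential space Π = ([0,1] × {0,1})^∞. -/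
abbrev PreqInf := ℕ → unitInterval × Bool

/-- The length-n prefix π^n of π ∈ Π. -/
def prefixn (π : PreqInf) (n : ℕ) : PreqFin := List.ofFn fun i : Fin n => π i

/-- A non-negative farthingale (values in [0,∞], with the convention 0·∞ = 0):
V(x) = (1-p)·V(x,p,0) + p·V(x,p,1). -/
def IsFarthingale (V : PreqFin → ℝ≥0∞) : Prop :=
  ∀ (x : PreqFin) (p : unitInterval),
    V x = ENNReal.ofReal (1 - (p : ℝ)) * V (x ++ [(p, false)])
        + ENNReal.ofReal (p : ℝ) * V (x ++ [(p, true)])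

/-- Upper game-theoretic probability of a prequential event E ⊆ Π. -/
def UpProb (E : Set PreqInf) : ℝ≥0∞ :=
  sInf {a | ∃ V : PreqFin → ℝ≥0∞, IsFarthingale V ∧ V [] = a ∧
    ∀ π ∈ E, 1 ≤ Filter.limsup (fun n => V (prefixn π n)) Filter.atTop}

/-- Γ(x): the set of infinite extensions in Π of the finite prequential sequence x. -/
def exts (x : PreqFin) : Set PreqInf := {π | prefixn π x.length = x}

/-- Conditional upper game-theoretic probability UpProb(E | x). -/
def UpProbCond (E : Set PreqInf) (x : PreqFin) : ℝ≥0∞ :=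
  sInf {a | ∃ V : PreqFin → ℝ≥0∞, IsFarthingale V ∧ V x = a ∧
    ∀ π ∈ E ∩ exts x, 1 ≤ Filter.limsup (fun n => V (prefixn π n)) Filter.atTop}


/-!
Fix `t < u < 1`. Whenever the path reaches a node `x` with `UpProbCond E x < t`, Sceptic invests
his current capital in a farthingale `W` with `W x < t` that succeeds on `E ∩ exts x`, rescaled to
start from that capital, and cashes in as soon as `W` reaches `u`; this multiplies his capital by
at least `u / t > 1`. Along a path of `E` on which the conditional upper probability drops below
`t` infinitely often, `W` does reach `u` every time, so any initial capital `c > 0` grows without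
bound. These paths therefore form a null set, and countable subadditivity over a sequence
`t ↑ 1` gives the exceptional set.
-/

lemma prefixn_succ (π : PreqInf) (n : ℕ) : prefixn π (n + 1) = prefixn π n ++ [π n] := by
  simp only [prefixn, List.ofFn_succ_last, Fin.val_castSucc, Fin.val_last]

lemma length_prefixn (π : PreqInf) (n : ℕ) : (prefixn π n).length = n := by
  simp [prefixn]

lemma mem_exts_prefixn (π : PreqInf) (n : ℕ) : π ∈ exts (prefixn π n) := by
  show prefixn π (prefixn π n).length = prefixn π n
  rw [length_prefixn]

lemma ofReal_one_sub_add_ofReal (p : unitInterval) :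
    ENNReal.ofReal (1 - (p : ℝ)) + ENNReal.ofReal p = 1 := by
  rw [← ENNReal.ofReal_add (sub_nonneg.2 p.2.2) p.2.1, sub_add_cancel, ENNReal.ofReal_one]

def Succeeds (V : PreqFin → ℝ≥0∞) (π : PreqInf) : Prop :=
  1 ≤ limsup (fun n => V (prefixn π n)) atTop

lemma Succeeds.mono {V W : PreqFin → ℝ≥0∞} {π : PreqInf} (h : Succeeds V π)
    (hVW : ∀ y, V y ≤ W y) : Succeeds W π :=
  h.trans (limsup_le_limsup (Eventually.of_forall fun _ => hVW _))

lemma isFarthingale_const (a : ℝ≥0∞) : IsFarthingale fun _ => a := fun _ p => by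
  rw [← add_mul, ofReal_one_sub_add_ofReal, one_mul]

lemma IsFarthingale.add {V W : PreqFin → ℝ≥0∞} (hV : IsFarthingale V) (hW : IsFarthingale W) :
    IsFarthingale fun y => V y + W y := fun x p => by
  beta_reduce
  rw [hV x p, hW x p]
  ring

lemma IsFarthingale.tsum {ι : Type*} {V : ι → PreqFin → ℝ≥0∞} (hV : ∀ i, IsFarthingale (V i)) :
    IsFarthingale fun y => ∑' i, V i y := fun x p => by
  beta_reduce
  rw [tsum_congr fun i => hV i x p, ENNReal.tsum_add, ENNReal.tsum_mul_left, ENNReal.tsum_mul_left]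

lemma UpProb_le {E : Set PreqInf} {V : PreqFin → ℝ≥0∞} (hV : IsFarthingale V)
    (hE : ∀ π ∈ E, Succeeds V π) : UpProb E ≤ V [] :=
  sInf_le ⟨V, hV, rfl, hE⟩

lemma exists_isFarthingale_of_UpProb_lt {E : Set PreqInf} {a : ℝ≥0∞} (h : UpProb E < a) :
    ∃ V, IsFarthingale V ∧ V [] < a ∧ ∀ π ∈ E, Succeeds V π := by
  obtain ⟨_, ⟨V, hV, rfl, hE⟩, ha⟩ := sInf_lt_iff.1 h
  exact ⟨V, hV, ha, hE⟩

lemma exists_isFarthingale_of_UpProbCond_lt {E : Set PreqInf} {x : PreqFin} {a : ℝ≥0∞}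
    (h : UpProbCond E x < a) :
    ∃ V, IsFarthingale V ∧ V x < a ∧ ∀ π ∈ E ∩ exts x, Succeeds V π := by
  obtain ⟨_, ⟨V, hV, rfl, hE⟩, ha⟩ := sInf_lt_iff.1 h
  exact ⟨V, hV, ha, hE⟩

lemma exists_isFarthingale_ne_zero_of_UpProbCond_lt {E : Set PreqInf} {x : PreqFin}
    {a : ℝ≥0∞} (h : UpProbCond E x < a) :
    ∃ V, IsFarthingale V ∧ V x ≠ 0 ∧ V x < a ∧ ∀ π ∈ E ∩ exts x, Succeeds V π := by
  obtain ⟨V, hV, hVa, hE⟩ := exists_isFarthingale_of_UpProbCond_lt h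
  obtain ⟨η, hη0, hηa⟩ := exists_between (tsub_pos_of_lt hVa)
  exact ⟨fun y => V y + η, hV.add (isFarthingale_const η), (hη0.trans_le le_add_self).ne',
    lt_tsub_iff_left.1 hηa, fun π hπ => (hE π hπ).mono fun _ => le_self_add⟩

lemma UpProbCond_le_one (E : Set PreqInf) (x : PreqFin) : UpProbCond E x ≤ 1 :=
  sInf_le ⟨fun _ => 1, isFarthingale_const 1, rfl, fun π _ => by simp⟩

lemma UpProb_iUnion_le {ι : Type*} [Countable ι] (F : ι → Set PreqInf) :
    UpProb (⋃ i, F i) ≤ ∑' i, UpProb (F i) := by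
  refine ENNReal.le_of_forall_pos_le_add fun ε hε hfin => ?_
  obtain ⟨δ, hδ, hδε⟩ := ENNReal.exists_pos_sum_of_countable (ENNReal.coe_pos.2 hε).ne' ι
  have hV : ∀ i, ∃ V, IsFarthingale V ∧ V [] < UpProb (F i) + δ i ∧ ∀ π ∈ F i, Succeeds V π :=
    fun i => exists_isFarthingale_of_UpProb_lt <|
      ENNReal.lt_add_right (ENNReal.ne_top_of_tsum_ne_top hfin.ne i) (ENNReal.coe_pos.2 (hδ i)).ne'
  choose V hVf hV0 hVF using hV
  calc UpProb (⋃ i, F i) ≤ ∑' i, V i [] :=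
        UpProb_le (IsFarthingale.tsum hVf) fun π hπ => by
          obtain ⟨i, hi⟩ := Set.mem_iUnion.1 hπ
          exact (hVF i π hi).mono fun _ => ENNReal.le_tsum i
    _ ≤ ∑' i, (UpProb (F i) + δ i) := ENNReal.tsum_le_tsum fun i => (hV0 i).le
    _ = ∑' i, UpProb (F i) + ∑' i, (δ i : ℝ≥0∞) := ENNReal.tsum_add
    _ ≤ ∑' i, UpProb (F i) + ε := by gcongr

inductive BetState
  | idle (capital : ℝ≥0∞)
  | active (start : PreqFin) (capital : ℝ≥0∞)

namespace BetState

variable (W : PreqFin → PreqFin → ℝ≥0∞) (S : Set PreqFin) (u : ℝ≥0∞)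

def value : BetState → PreqFin → ℝ≥0∞
  | idle C, _ => C
  | active x C, y => C * W x y / W x x

/- The state chosen at node `y` governs the bets on the outcome that follows `y`;
`run W S u st x l` is the state at `x ++ l` when the state at `x` is `st`. -/
open Classical in
def step : BetState → PreqFin → BetState
  | idle C, y => if y ∈ S then active y C else idle C
  | active x C, y => if u ≤ W x y then idle (C * W x y / W x x) else active x C

def run : BetState → PreqFin → PreqFin → BetState
  | st, _, [] => st
  | st, x, a :: l => run (step W S u st x) (x ++ [a]) l

lemma run_append_singleton (l : PreqFin) (st : BetState) (x : PreqFin)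
    (a : unitInterval × Bool) :
    run W S u st x (l ++ [a]) = step W S u (run W S u st x l) (x ++ l) := by
  induction l generalizing st x with
  | nil => simp [run]
  | cons b l ih => simp [run, ih]

lemma value_step_self (hW : ∀ x, W x x ≠ 0 ∧ W x x ≠ ∞) (st : BetState) (y : PreqFin) :
    value W (step W S u st y) y = value W st y := by
  cases st with
  | idle C =>
    simp only [step]
    split_ifs
    · exact ENNReal.mul_div_cancel_right (hW y).1 (hW y).2
    · rfl
  | active x C =>
    simp only [step]
    split_ifs <;> rfl

lemma isFarthingale_value (hW : ∀ x, IsFarthingale (W x)) (st : BetState) :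
    IsFarthingale (value W st) := by
  cases st with
  | idle C => exact isFarthingale_const C
  | active x C =>
    intro y p
    simp only [value, div_eq_mul_inv]
    rw [hW x y p]
    ring

end BetState

def betState (W : PreqFin → PreqFin → ℝ≥0∞) (S : Set PreqFin) (u c : ℝ≥0∞) (y : PreqFin) :
    BetState :=
  BetState.run W S u (.idle c) [] y

def betCapital (W : PreqFin → PreqFin → ℝ≥0∞) (S : Set PreqFin) (u c : ℝ≥0∞) (y : PreqFin) :
    ℝ≥0∞ :=
  (betState W S u c y).value W y

section betting

variable {W : PreqFin → PreqFin → ℝ≥0∞} {S : Set PreqFin} {u c : ℝ≥0∞}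

lemma betState_append_singleton (y : PreqFin) (a : unitInterval × Bool) :
    betState W S u c (y ++ [a]) = (betState W S u c y).step W S u y := by
  simpa [betState] using BetState.run_append_singleton W S u y (.idle c) [] a

lemma betState_prefixn_succ (π : PreqInf) (n : ℕ) :
    betState W S u c (prefixn π (n + 1)) =
      (betState W S u c (prefixn π n)).step W S u (prefixn π n) := by
  rw [prefixn_succ, betState_append_singleton]

lemma isFarthingale_betCapital (hW : ∀ x, IsFarthingale (W x))
    (hWx : ∀ x, W x x ≠ 0 ∧ W x x ≠ ∞) : IsFarthingale (betCapital W S u c) := by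
  intro y p
  simp only [betCapital, betState_append_singleton]
  rw [← BetState.isFarthingale_value W hW _ y p, BetState.value_step_self W S u hWx]

end betting

lemma exists_ge_eq_of_stuck {α : Type*} {s : ℕ → α} {a : α} {P : ℕ → Prop}
    (hs : ∀ m, ¬ P m → s m = a → s (m + 1) = a) {n : ℕ} (hn : s n = a) (hP : ∃ m ≥ n, P m) :
    ∃ m ≥ n, P m ∧ s m = a := by
  obtain ⟨_, hnm, hPm⟩ := hP
  obtain ⟨d, rfl⟩ := Nat.exists_eq_add_of_le hnm
  clear hnm
  induction d generalizing n with
  | zero => exact ⟨n, le_rfl, hPm, hn⟩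
  | succ d ih =>
    by_cases hPn : P n
    · exact ⟨n, le_rfl, hPn, hn⟩
    · obtain ⟨m, hm, hPm', hsm⟩ := ih (hs n hPn hn) (by rwa [Nat.add_right_comm])
      exact ⟨m, by omega, hPm', hsm⟩

section growth

variable {W : PreqFin → PreqFin → ℝ≥0∞} {S : Set PreqFin} {G : Set PreqInf} {u c : ℝ≥0∞}

lemma exists_betState_idle_mul_le (t : ℝ≥0∞) (hu1 : u < 1)
    (hW : ∀ x ∈ S, W x x ≤ t ∧ ∀ π ∈ G ∩ exts x, Succeeds (W x) π)
    {π : PreqInf} (hπ : π ∈ G) (hS : ∃ᶠ n in atTop, prefixn π n ∈ S) {n : ℕ} {C : ℝ≥0∞}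
    (hn : betState W S u c (prefixn π n) = .idle C) :
    ∃ m > n, ∃ C', betState W S u c (prefixn π m) = .idle C' ∧ C * (u / t) ≤ C' := by
  have hs := betState_prefixn_succ (W := W) (S := S) (u := u) (c := c) π
  obtain ⟨m, hnm, hmS, hm⟩ := exists_ge_eq_of_stuck (s := fun n => betState W S u c (prefixn π n))
    (fun m hm hsm => by simp only [hs, hsm, BetState.step, if_neg hm]) hn
    (frequently_atTop.1 hS n)
  set x := prefixn π m
  have hact : betState W S u c (prefixn π (m + 1)) = .active x C := by
    rw [hs, hm]
    exact if_pos hmS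
  obtain ⟨hxt, hxG⟩ := hW x hmS
  have hreach : ∃ j ≥ m + 1, u ≤ W x (prefixn π j) :=
    frequently_atTop.1 ((frequently_lt_of_lt_limsup (by isBoundedDefault)
      (hu1.trans_le (hxG π ⟨hπ, mem_exts_prefixn π m⟩))).mono fun _ => le_of_lt) (m + 1)
  obtain ⟨j, hmj, hju, hj⟩ := exists_ge_eq_of_stuck (s := fun n => betState W S u c (prefixn π n))
    (fun j hj hsj => by simp only [hs, hsj, BetState.step, if_neg hj]) hact hreach
  refine ⟨j + 1, by omega, C * W x (prefixn π j) / W x x, ?_, ?_⟩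
  · rw [hs, hj]
    exact if_pos hju
  calc C * (u / t) ≤ C * (W x (prefixn π j) / W x x) :=
        mul_le_mul_right (ENNReal.div_le_div hju hxt) C
    _ = C * W x (prefixn π j) / W x x := (mul_div_assoc _ _ _).symm

lemma succeeds_betCapital {t : ℝ≥0∞} (hc : c ≠ 0) (hut : 1 < u / t) (hu1 : u < 1)
    (hW : ∀ x ∈ S, W x x ≤ t ∧ ∀ π ∈ G ∩ exts x, Succeeds (W x) π)
    {π : PreqInf} (hπ : π ∈ G) (hS : ∃ᶠ n in atTop, prefixn π n ∈ S) :
    Succeeds (betCapital W S u c) π := by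
  have hgrow : ∀ k, ∃ n ≥ k, ∃ C, betState W S u c (prefixn π n) = .idle C ∧
      c * (u / t) ^ k ≤ C := by
    intro k
    induction k with
    | zero => exact ⟨0, le_rfl, c, rfl, by simp⟩
    | succ k ih =>
      obtain ⟨n, hkn, C, hn, hC⟩ := ih
      obtain ⟨m, hnm, C', hm, hC'⟩ := exists_betState_idle_mul_le t hu1 hW hπ hS hn
      refine ⟨m, by omega, C', hm, ?_⟩
      rw [pow_succ, ← mul_assoc]
      exact (mul_le_mul_left hC _).trans hC'
  have hlarge : ∀ᶠ k in atTop, 1 ≤ c * (u / t) ^ k := by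
    have h := ENNReal.Tendsto.const_mul (a := c)
      (ENNReal.tendsto_pow_atTop_nhds_top_iff.2 hut) (Or.inl ENNReal.top_ne_zero)
    rw [ENNReal.mul_top hc] at h
    exact (h.eventually_const_lt ENNReal.one_lt_top).mono fun _ => le_of_lt
  refine le_limsup_of_frequently_le (frequently_atTop.2 fun K => ?_) (by isBoundedDefault)
  obtain ⟨k, hk, hKk⟩ := (hlarge.and (eventually_ge_atTop K)).exists
  obtain ⟨n, hkn, C, hn, hC⟩ := hgrow k
  refine ⟨n, hKk.trans hkn, ?_⟩
  simp only [betCapital, hn, BetState.value]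
  exact hk.trans hC

end growth

lemma UpProb_frequently_lt_eq_zero (E : Set PreqInf) {t : ℝ≥0∞} (ht : t < 1) :
    UpProb {π | π ∈ E ∧ ∃ᶠ n in atTop, UpProbCond E (prefixn π n) < t} = 0 := by
  obtain ⟨u, htu, hu1⟩ := exists_between ht
  have hut : 1 < u / t := by
    rwa [ENNReal.lt_div_iff_mul_lt (Or.inr ENNReal.one_ne_top) (Or.inr one_ne_zero), one_mul]
  -- Off `{x | UpProbCond E x < t}` the strategy never uses `W x`; the constant `1` only makes the
  -- rescaling hypotheses of `isFarthingale_betCapital` hold at every node.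
  have hW : ∀ x, ∃ V, IsFarthingale V ∧ V x ≠ 0 ∧ V x ≠ ∞ ∧
      (UpProbCond E x < t → V x ≤ t ∧ ∀ π ∈ E ∩ exts x, Succeeds V π) := by
    intro x
    by_cases hx : UpProbCond E x < t
    · obtain ⟨V, hV, hV0, hVt, hVE⟩ := exists_isFarthingale_ne_zero_of_UpProbCond_lt hx
      exact ⟨V, hV, hV0, (hVt.trans ht).ne_top, fun _ => ⟨hVt.le, hVE⟩⟩
    · exact ⟨fun _ => 1, isFarthingale_const 1, one_ne_zero, ENNReal.one_ne_top,
        fun h => absurd h hx⟩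
  choose W hWf hW0 hWtop hWE using hW
  refine le_zero_iff.1 (ENNReal.le_of_forall_pos_le_add fun ε hε _ => ?_)
  rw [zero_add]
  exact UpProb_le (isFarthingale_betCapital hWf fun x => ⟨hW0 x, hWtop x⟩) fun π hπ =>
    succeeds_betCapital (S := {x | UpProbCond E x < t}) (ENNReal.coe_ne_zero.2 hε.ne') hut hu1
      hWE hπ.1 hπ.2

/-- Game-theoretic Lévy zero-one law: for any prequential event E, for almost all π ∈ E
(i.e., outside a set N with UpProb(N) = 0), UpProb(E | π^n) → 1 as n → ∞. -/
theorem levy_zero_one_law (E : Set PreqInf) :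
    ∃ N : Set PreqInf, UpProb N = 0 ∧
      ∀ π ∈ E \ N,
        Filter.Tendsto (fun n => UpProbCond E (prefixn π n)) Filter.atTop (nhds 1) := by
  obtain ⟨t, -, ht1, ht⟩ := exists_seq_strictMono_tendsto' (zero_lt_one' ℝ≥0∞)
  refine ⟨⋃ k, {π | π ∈ E ∧ ∃ᶠ n in atTop, UpProbCond E (prefixn π n) < t k},
    le_zero_iff.1 ((UpProb_iUnion_le _).trans_eq ?_), ?_⟩
  · simp [UpProb_frequently_lt_eq_zero E (ht1 _).2]
  rintro π ⟨hπE, hπN⟩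
  have hev : ∀ k, ∀ᶠ n in atTop, t k ≤ UpProbCond E (prefixn π n) := fun k => by
    simpa [hπE] using fun h => hπN (Set.mem_iUnion_of_mem k h)
  refine tendsto_order.2 ⟨fun a ha => ?_, fun b hb => Eventually.of_forall fun n =>
    (UpProbCond_le_one E _).trans_lt hb⟩
  obtain ⟨k, hk⟩ := (ht.eventually_const_lt ha).exists
  exact (hev k).mono fun n hn => hk.trans_le hn
end
end

section
/- For every compact subset K of the prequential space Π, the upper game-theoretic probability equals the upper measure-theoretic probability: UpProb(K) = UpProbMeas(K). -/
open Filter Topology MeasureTheory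
open scoped ENNReal NNReal unitInterval

noncomputable section

/-- Ω = {0,1}^∞. -/
abbrev BinSeq := ℕ → Bool

/-- The length-n prefix ω^n of ω ∈ Ω. -/
def bprefix (ω : BinSeq) (n : ℕ) : List Bool := List.ofFn fun i : Fin n => ω i

/-- Γ(x): the set of infinite extensions of the finite binary sequence x. -/
def cyl (x : List Bool) : Set BinSeq := {ω | bprefix ω x.length = x}

/-- A forecasting system is a function φ : Ω◇ → [0,1]. -/
abbrev ForecastingSystem := List Bool → unitInterval

/-- μ is the probability measure Prob_φ induced by the forecasting system φ:
Prob_φ(Γ(x1)) = φ(x)·Prob_φ(Γ(x)). -/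
def IsForecastMeasure (φ : ForecastingSystem) (μ : Measure BinSeq) : Prop :=
  IsProbabilityMeasure μ ∧
    ∀ x : List Bool, μ (cyl (x ++ [true])) = ENNReal.ofReal (φ x : ℝ) * μ (cyl x)

/-- ω^φ ∈ Π: the interleaving of the forecasts produced by φ with the outcomes of ω. -/
def seqPhi (φ : ForecastingSystem) (ω : BinSeq) : PreqInf :=
  fun n => (φ (bprefix ω n), ω n)

/-- Upper measure-theoretic probability of a prequential event E ⊆ Π
(the measure, coerced to an outer measure, is applied to the possibly
non-measurable set {ω : ω^φ ∈ E}). -/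
def UpProbMeas (E : Set PreqInf) : ℝ≥0∞ :=
  ⨆ (φ : ForecastingSystem) (μ : Measure BinSeq) (_ : IsForecastMeasure φ μ),
    μ {ω | seqPhi φ ω ∈ E}


/-!
Ville's inequality gives `UpProbMeas E ≤ UpProb E` for every event: stopping a farthingale
when it first reaches a level `c < 1` keeps its mean under every `Prob_φ`.

For the converse fix `N` and let `A_N` be the event that the first `N` rounds agree with some
`π ∈ K`. Backward induction gives the value of the `N`-round game in which Forecaster tries to
reach `A_N`; it is a superfarthingale, and adding back its drift yields a farthingale witnessing
`UpProb K ≤ value_N`. Nearly optimal play of Forecaster is a forecasting system `φ_N` with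
`Prob_{φ_N}(A_N) ≈ value_N`. Since `[0,1]^{Ω◇}` is compact, `(φ_N)` has a cluster point `φ`, and
as `K` is compact, `φ ↦ Prob_φ(A_M)` is upper semicontinuous, so `Prob_φ(A_M) ≥ inf_N value_N`
for every `M`. Finally `⋂ M, A_M ⊆ {ω | ω^φ ∈ K}` because `K` is closed.
-/

open Set

section Topology

lemma IsCompact.isClosed_setOf_exists_agree {X Y : Type*} [TopologicalSpace X]
    [TopologicalSpace Y] [T2Space Y] {K : Set (ℕ → Y)} (hK : IsCompact K) (M : ℕ)
    {g : X → ℕ → Y} (hg : ∀ i, Continuous fun a => g a i) :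
    IsClosed {a | ∃ π ∈ K, ∀ i < M, π i = g a i} := by
  have : {a | ∃ π ∈ K, ∀ i < M, π i = g a i}
      = (fun a (i : Fin M) => g a i) ⁻¹' ((fun π (i : Fin M) => π i) '' K) := by
    ext a
    simp [funext_iff, Fin.forall_iff]
  rw [this]
  exact (hK.image (by fun_prop)).isClosed.preimage (continuous_pi fun i : Fin M => hg i)

lemma IsClosed.mem_of_forall_exists_agree {Y : Type*} [TopologicalSpace Y] {K : Set (ℕ → Y)}
    (hK : IsClosed K) {x : ℕ → Y} (h : ∀ M, ∃ π ∈ K, ∀ i < M, π i = x i) : x ∈ K := by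
  choose π hπK hπ using h
  have hlim : Tendsto π atTop (𝓝 x) := tendsto_pi_nhds.2 fun i =>
    tendsto_const_nhds.congr' ((eventually_gt_atTop i).mono fun M hM => (hπ M i hM).symm)
  exact hK.mem_of_tendsto hlim (Eventually.of_forall hπK)

lemma IsClosed.upperSemicontinuous_indicator_of_continuous {X γ : Type*} [TopologicalSpace X]
    [TopologicalSpace γ] [LinearOrder γ] [OrderClosedTopology γ] [Zero γ] {s : Set X} {f : X → γ}
    (hs : IsClosed s) (hf : Continuous f) (hf0 : ∀ a, 0 ≤ f a) :
    UpperSemicontinuous (s.indicator f) := by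
  intro a y hy
  by_cases ha : a ∈ s
  · rw [indicator_of_mem ha] at hy
    filter_upwards [hf.continuousAt.eventually_lt continuousAt_const hy] with b hb
    exact (indicator_le_self' (fun b _ => hf0 b) b).trans_lt hb
  · filter_upwards [hs.isOpen_compl.mem_nhds ha] with b hb
    rwa [indicator_of_notMem hb, ← indicator_of_notMem ha f]

end Topology

lemma exists_iSup_le_add {ι : Type*} [Nonempty ι] {f : ι → ℝ≥0∞} (hf : ⨆ i, f i ≠ ∞) {δ : ℝ≥0∞}
    (hδ : δ ≠ 0) : ∃ i, ⨆ j, f j ≤ f i + δ := by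
  by_contra! h
  have hle : (⨆ j, f j) + δ ≤ (⨆ j, f j) + 0 := by
    rw [ENNReal.iSup_add, add_zero]
    exact iSup_le fun i => (h i).le
  exact hδ (nonpos_iff_eq_zero.1 (ENNReal.le_of_add_le_add_left hf hle))

section BinarySequences

lemma length_bprefix (ω : BinSeq) (n : ℕ) : (bprefix ω n).length = n := by
  simp [bprefix]

lemma bprefix_succ (ω : BinSeq) (n : ℕ) : bprefix ω (n + 1) = bprefix ω n ++ [ω n] := by
  rw [bprefix, List.ofFn_succ', List.concat_eq_append]
  simp [bprefix]

lemma take_bprefix (ω : BinSeq) {m n : ℕ} (h : m ≤ n) : (bprefix ω n).take m = bprefix ω m := by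
  apply List.ext_getElem <;> simp [bprefix, h]

lemma mem_cyl_iff_bprefix_eq {ω : BinSeq} {x : List Bool} {n : ℕ} (hx : x.length = n) :
    ω ∈ cyl x ↔ bprefix ω n = x := by
  subst hx; rfl

@[simp] lemma cyl_nil : cyl [] = univ := by
  ext ω; simp [cyl, bprefix]

lemma mem_cyl_snoc {x : List Bool} {b : Bool} {ω : BinSeq} :
    ω ∈ cyl (x ++ [b]) ↔ ω ∈ cyl x ∧ ω x.length = b := by
  simp only [cyl, mem_ofPred_eq, List.length_append, List.length_singleton, bprefix_succ]
  exact ⟨fun h => by simpa using List.append_inj h (length_bprefix ω _),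
    fun ⟨h1, h2⟩ => by rw [h1, h2]⟩

lemma cyl_eq_union_snoc (x : List Bool) : cyl x = cyl (x ++ [false]) ∪ cyl (x ++ [true]) := by
  ext ω; cases h : ω x.length <;> simp [mem_cyl_snoc, h]

lemma disjoint_cyl_snoc (x : List Bool) : Disjoint (cyl (x ++ [false])) (cyl (x ++ [true])) :=
  Set.disjoint_left.2 fun ω h1 h2 => by
    rw [mem_cyl_snoc] at h1 h2; simp [h1.2] at h2

lemma measurableSet_cyl (x : List Bool) : MeasurableSet (cyl x) := by
  induction x using List.reverseRecOn with
  | nil => simp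
  | append_singleton x b ih =>
    have : cyl (x ++ [b]) = cyl x ∩ {ω | ω x.length = b} := by ext; exact mem_cyl_snoc
    rw [this]
    exact ih.inter (measurableSet_eq_fun (measurable_pi_apply _) measurable_const)

def boolStrings : ℕ → Finset (List Bool)
  | 0 => {[]}
  | n + 1 => (boolStrings n ×ˢ Finset.univ).image fun q => q.1 ++ [q.2]

lemma mem_boolStrings {n : ℕ} {x : List Bool} : x ∈ boolStrings n ↔ x.length = n := by
  induction n generalizing x with
  | zero => simp [boolStrings]
  | succ n ih =>
    induction x using List.reverseRecOn with
    | nil => simp [boolStrings]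
    | append_singleton x b _ => simp [boolStrings, ih]

lemma sum_boolStrings_succ {M : Type*} [AddCommMonoid M] (n : ℕ) (F : List Bool → M) :
    ∑ x ∈ boolStrings (n + 1), F x
      = ∑ x ∈ boolStrings n, (F (x ++ [false]) + F (x ++ [true])) := by
  rw [boolStrings, Finset.sum_image, Finset.sum_product]
  · simp [add_comm]
  · rintro ⟨x, b⟩ _ ⟨y, c⟩ _ h
    simpa using List.append_inj' h rfl

lemma setOf_bprefix_eq_biUnion (Q : List Bool → Prop) [DecidablePred Q] (n : ℕ) :
    {ω : BinSeq | Q (bprefix ω n)} = ⋃ x ∈ (boolStrings n).filter Q, cyl x := by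
  ext ω
  simp only [mem_ofPred_eq, mem_iUnion, exists_prop, Finset.mem_filter, mem_boolStrings]
  exact ⟨fun h => ⟨_, ⟨length_bprefix ω n, h⟩, (mem_cyl_iff_bprefix_eq (length_bprefix ω n)).2 rfl⟩,
    fun ⟨_, ⟨hx, hQ⟩, hω⟩ => (mem_cyl_iff_bprefix_eq hx).1 hω ▸ hQ⟩

lemma measurableSet_setOf_bprefix (Q : List Bool → Prop) (n : ℕ) :
    MeasurableSet {ω : BinSeq | Q (bprefix ω n)} := by
  classical
  rw [setOf_bprefix_eq_biUnion]
  exact Finset.measurableSet_biUnion _ fun x _ => measurableSet_cyl x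

lemma setOf_apply_eq_biUnion (n : ℕ) (b : Bool) :
    {ω : BinSeq | ω n = b} = ⋃ x ∈ boolStrings n, cyl (x ++ [b]) := by
  ext ω
  simp only [mem_ofPred_eq, mem_iUnion, exists_prop, mem_boolStrings, mem_cyl_snoc]
  refine ⟨fun h => ⟨_, length_bprefix ω n, ?_, by rw [length_bprefix, h]⟩, ?_⟩
  · exact (mem_cyl_iff_bprefix_eq (length_bprefix ω n)).2 rfl
  · rintro ⟨x, rfl, -, h⟩
    exact h

end BinarySequences

section CylinderProbabilities

def bernProb (p : I) (b : Bool) : ℝ≥0∞ := ENNReal.ofReal (if b then p else 1 - p)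

@[simp] lemma bernProb_false (p : I) : bernProb p false = ENNReal.ofReal (1 - p) := rfl

@[simp] lemma bernProb_true (p : I) : bernProb p true = ENNReal.ofReal p := rfl

lemma bernProb_false_add_true (p : I) : bernProb p false + bernProb p true = 1 := by
  rw [bernProb_false, bernProb_true, ← ENNReal.ofReal_add (by simpa using p.2.2) p.2.1]
  simp

lemma bernProb_ne_top (p : I) (b : Bool) : bernProb p b ≠ ∞ := ENNReal.ofReal_ne_top

lemma continuous_bernProb (b : Bool) : Continuous fun p : I => bernProb p b := by
  cases b <;> exact ENNReal.continuous_ofReal.comp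
    (by simp only [if_true, Bool.false_eq_true, if_false]; fun_prop)

def cylProb (φ : ForecastingSystem) (x : List Bool) : ℝ≥0∞ :=
  ∏ i ∈ Finset.range x.length, bernProb (φ (x.take i)) (x.getD i false)

@[simp] lemma cylProb_nil (φ : ForecastingSystem) : cylProb φ [] = 1 := by
  simp [cylProb]

lemma cylProb_snoc (φ : ForecastingSystem) (x : List Bool) (b : Bool) :
    cylProb φ (x ++ [b]) = cylProb φ x * bernProb (φ x) b := by
  rw [cylProb, List.length_append, List.length_singleton, Finset.prod_range_succ, cylProb]
  congr 1
  · refine Finset.prod_congr rfl fun i hi => ?_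
    have hi : i < x.length := Finset.mem_range.1 hi
    rw [List.take_append_of_le_length hi.le, List.getD_append _ _ _ _ hi]
  · simp

lemma cylProb_eq_add_snoc (φ : ForecastingSystem) (x : List Bool) :
    cylProb φ x = cylProb φ (x ++ [false]) + cylProb φ (x ++ [true]) := by
  rw [cylProb_snoc, cylProb_snoc, ← mul_add, bernProb_false_add_true, mul_one]

lemma sum_cylProb_boolStrings (φ : ForecastingSystem) (n : ℕ) :
    ∑ x ∈ boolStrings n, cylProb φ x = 1 := by
  induction n with
  | zero => simp [boolStrings]
  | succ n ih =>
    rw [sum_boolStrings_succ, ← ih]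
    exact Finset.sum_congr rfl fun x _ => (cylProb_eq_add_snoc φ x).symm

lemma continuous_cylProb (x : List Bool) : Continuous fun φ : ForecastingSystem => cylProb φ x :=
  continuous_iff_continuousAt.2 fun _ => ENNReal.tendsto_finsetProd_of_ne_top _
    (fun i _ => ((continuous_bernProb _).comp (continuous_apply (x.take i))).tendsto _)
    (fun _ _ => bernProb_ne_top _ _)

end CylinderProbabilities

section ForecastMeasures

variable {φ : ForecastingSystem} {μ : Measure BinSeq}

lemma IsForecastMeasure.measure_cyl (hμ : IsForecastMeasure φ μ) (x : List Bool) :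
    μ (cyl x) = cylProb φ x := by
  have := hμ.1
  induction x using List.reverseRecOn with
  | nil => simp
  | append_singleton x b ih =>
    have htrue : μ (cyl (x ++ [true])) = cylProb φ (x ++ [true]) := by
      rw [hμ.2, ih, cylProb_snoc, mul_comm, bernProb_true]
    cases b
    · have hsplit : μ (cyl x) = μ (cyl (x ++ [false])) + μ (cyl (x ++ [true])) := by
        rw [← measure_union (disjoint_cyl_snoc x) (measurableSet_cyl _), ← cyl_eq_union_snoc]
      rw [cylProb_eq_add_snoc, ← htrue] at ih
      exact WithTop.add_right_cancel (measure_ne_top μ _) (hsplit.symm.trans ih)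
    · exact htrue

lemma IsForecastMeasure.measure_setOf_bprefix (hμ : IsForecastMeasure φ μ) (Q : List Bool → Prop)
    [DecidablePred Q] (n : ℕ) :
    μ {ω | Q (bprefix ω n)} = ∑ x ∈ (boolStrings n).filter Q, cylProb φ x := by
  rw [setOf_bprefix_eq_biUnion, measure_biUnion_finset _ fun x _ => measurableSet_cyl x]
  · exact Finset.sum_congr rfl fun x _ => hμ.measure_cyl x
  · intro x hx y hy hxy
    simp only [Finset.coe_filter, mem_boolStrings, mem_ofPred_eq] at hx hy
    exact Set.disjoint_left.2 fun ω hωx hωy => hxy <|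
      ((mem_cyl_iff_bprefix_eq hx.1).1 hωx).symm.trans ((mem_cyl_iff_bprefix_eq hy.1).1 hωy)

end ForecastMeasures

section Simulation

def simPrefix (φ : ForecastingSystem) (U : ℕ → I) : ℕ → List Bool
  | 0 => []
  | n + 1 => simPrefix φ U n ++ [decide (U n < φ (simPrefix φ U n))]

/-- Outcome `n` is drawn by comparing an independent uniform variable `U n` with the forecast. -/
def simulate (φ : ForecastingSystem) (U : ℕ → I) : BinSeq :=
  fun n => decide (U n < φ (simPrefix φ U n))

lemma bprefix_simulate (φ : ForecastingSystem) (U : ℕ → I) (n : ℕ) :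
    bprefix (simulate φ U) n = simPrefix φ U n := by
  induction n with
  | zero => rfl
  | succ n ih => rw [bprefix_succ, ih, simPrefix]; rfl

lemma simulate_mem_cyl_iff (φ : ForecastingSystem) (U : ℕ → I) (x : List Bool) :
    simulate φ U ∈ cyl x ↔ ∀ i < x.length, decide (U i < φ (x.take i)) = x.getD i false := by
  induction x using List.reverseRecOn with
  | nil => simp
  | append_singleton x b ih =>
    have hprefix : simulate φ U ∈ cyl x ↔ ∀ i < x.length,
        decide (U i < φ ((x ++ [b]).take i)) = (x ++ [b]).getD i false := by
      refine ih.trans (forall₂_congr fun i hi => ?_)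
      rw [List.take_append_of_le_length hi.le, List.getD_append _ _ _ _ hi]
    simp only [mem_cyl_snoc, List.length_append, List.length_singleton, Nat.forall_lt_succ_right,
      ← hprefix]
    refine and_congr_right fun hx => ?_
    have hlast : simulate φ U x.length = decide (U x.length < φ x) := by
      rw [simulate, ← bprefix_simulate, (mem_cyl_iff_bprefix_eq rfl).1 hx]
    simp [hlast]

lemma setOf_decide_lt_eq (p : I) (b : Bool) :
    {u : I | decide (u < p) = b} = if b then Iio p else Ici p := by
  cases b <;> ext <;> simp

lemma measurableSet_setOf_decide_lt (p : I) (b : Bool) :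
    MeasurableSet {u : I | decide (u < p) = b} := by
  rw [setOf_decide_lt_eq]
  split_ifs
  exacts [measurableSet_Iio, measurableSet_Ici]

lemma volume_setOf_decide_lt (p : I) (b : Bool) :
    volume {u : I | decide (u < p) = b} = bernProb p b := by
  rw [setOf_decide_lt_eq]
  cases b <;> simp

lemma preimage_simulate_cyl (φ : ForecastingSystem) (x : List Bool) :
    simulate φ ⁻¹' cyl x = Set.pi (Finset.range x.length)
      fun i => {u | decide (u < φ (x.take i)) = x.getD i false} := by
  ext U
  simp [simulate_mem_cyl_iff]

lemma measurableSet_preimage_simulate_cyl (φ : ForecastingSystem) (x : List Bool) :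
    MeasurableSet (simulate φ ⁻¹' cyl x) := by
  rw [preimage_simulate_cyl]
  exact MeasurableSet.pi (Finset.countable_toSet _) fun i _ => measurableSet_setOf_decide_lt _ _

lemma measurable_simulate (φ : ForecastingSystem) : Measurable (simulate φ) := by
  refine measurable_pi_iff.2 fun n => measurable_to_bool ?_
  have : (fun U => simulate φ U n) ⁻¹' {true} = simulate φ ⁻¹' {ω | ω n = true} := rfl
  rw [this, setOf_apply_eq_biUnion, preimage_iUnion₂]
  exact Finset.measurableSet_biUnion _ fun x _ => measurableSet_preimage_simulate_cyl φ _

def forecastMeasure (φ : ForecastingSystem) : Measure BinSeq :=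
  (Measure.infinitePi fun _ : ℕ => (volume : Measure I)).map (simulate φ)

instance (φ : ForecastingSystem) : IsProbabilityMeasure (forecastMeasure φ) :=
  Measure.isProbabilityMeasure_map (measurable_simulate φ).aemeasurable

lemma forecastMeasure_cyl (φ : ForecastingSystem) (x : List Bool) :
    forecastMeasure φ (cyl x) = cylProb φ x := by
  rw [forecastMeasure, Measure.map_apply (measurable_simulate φ) (measurableSet_cyl x),
    preimage_simulate_cyl]
  exact (Measure.infinitePi_pi _ fun _ _ => measurableSet_setOf_decide_lt _ _).trans
    (Finset.prod_congr rfl fun _ _ => volume_setOf_decide_lt _ _)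

lemma isForecastMeasure_forecastMeasure (φ : ForecastingSystem) :
    IsForecastMeasure φ (forecastMeasure φ) := by
  refine ⟨inferInstance, fun x => ?_⟩
  rw [forecastMeasure_cyl, forecastMeasure_cyl, cylProb_snoc, mul_comm, bernProb_true]

end Simulation

section PrequentialPaths

def seqPhiList (φ : ForecastingSystem) (x : List Bool) : PreqFin :=
  List.ofFn fun i : Fin x.length => (φ (x.take i), x[i])

@[simp] lemma seqPhiList_nil (φ : ForecastingSystem) : seqPhiList φ [] = [] := rfl

@[simp] lemma length_seqPhiList (φ : ForecastingSystem) (x : List Bool) :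
    (seqPhiList φ x).length = x.length := by
  simp [seqPhiList]

lemma getElem?_seqPhiList (φ : ForecastingSystem) (x : List Bool) {i : ℕ} (hi : i < x.length) :
    (seqPhiList φ x)[i]? = some (φ (x.take i), x.getD i false) := by
  simp [seqPhiList, hi]

lemma seqPhiList_snoc (φ : ForecastingSystem) (x : List Bool) (b : Bool) :
    seqPhiList φ (x ++ [b]) = seqPhiList φ x ++ [(φ x, b)] := by
  refine List.ext_getElem? fun i => ?_
  rcases lt_trichotomy i x.length with hi | rfl | hi
  · rw [getElem?_seqPhiList _ _ (by simp; omega), List.getElem?_append_left (by simpa using hi),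
      getElem?_seqPhiList _ _ hi, List.take_append_of_le_length hi.le, List.getD_append _ _ _ _ hi]
  · rw [getElem?_seqPhiList _ _ (by simp), List.getElem?_append_right (by simp)]
    simp
  · rw [List.getElem?_eq_none (by simp; omega), List.getElem?_eq_none (by simp; omega)]

lemma take_seqPhiList (φ : ForecastingSystem) (x : List Bool) (m : ℕ) :
    (seqPhiList φ x).take m = seqPhiList φ (x.take m) := by
  refine List.ext_getElem? fun i => ?_
  rw [List.getElem?_take]
  by_cases hi : i < m ∧ i < x.length
  · rw [if_pos hi.1, getElem?_seqPhiList _ _ hi.2, getElem?_seqPhiList _ _ (by simp [hi]),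
      List.take_take, min_eq_left hi.1.le]
    simp [List.getD_eq_getElem?_getD, hi.1]
  · rcases not_and_or.1 hi with hi | hi <;> simp [not_lt.1 hi]

lemma prefixn_seqPhi (φ : ForecastingSystem) (ω : BinSeq) (n : ℕ) :
    prefixn (seqPhi φ ω) n = seqPhiList φ (bprefix ω n) := by
  refine List.ext_getElem? fun i => ?_
  by_cases hi : i < n
  · rw [getElem?_seqPhiList _ _ (by simpa [length_bprefix] using hi), take_bprefix ω hi.le]
    simp [prefixn, seqPhi, bprefix, hi]
  · rw [List.getElem?_eq_none (by simp [prefixn]; omega),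
      List.getElem?_eq_none (by simp [length_bprefix]; omega)]

end PrequentialPaths

section Farthingales

def stepMean (V : PreqFin → ℝ≥0∞) (y : PreqFin) (p : I) : ℝ≥0∞ :=
  bernProb p false * V (y ++ [(p, false)]) + bernProb p true * V (y ++ [(p, true)])

lemma IsFarthingale.stepMean_eq {V : PreqFin → ℝ≥0∞} (hV : IsFarthingale V) (y : PreqFin)
    (p : I) : stepMean V y p = V y :=
  (hV y p).symm

lemma stepMean_const_of_snoc {V : PreqFin → ℝ≥0∞} {y : PreqFin} {p : I}
    (h : ∀ b, V (y ++ [(p, b)]) = V y) : stepMean V y p = V y := by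
  rw [stepMean, h, h, ← add_mul, bernProb_false_add_true, one_mul]

def horizonMean (φ : ForecastingSystem) (n : ℕ) (F : PreqFin → ℝ≥0∞) : ℝ≥0∞ :=
  ∑ x ∈ boolStrings n, cylProb φ x * F (seqPhiList φ x)

@[simp] lemma horizonMean_zero (φ : ForecastingSystem) (F : PreqFin → ℝ≥0∞) :
    horizonMean φ 0 F = F [] := by
  simp [horizonMean, boolStrings]

lemma horizonMean_succ (φ : ForecastingSystem) (n : ℕ) (F : PreqFin → ℝ≥0∞) :
    horizonMean φ (n + 1) F
      = ∑ x ∈ boolStrings n, cylProb φ x * stepMean F (seqPhiList φ x) (φ x) := by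
  rw [horizonMean, sum_boolStrings_succ]
  refine Finset.sum_congr rfl fun x _ => ?_
  simp only [cylProb_snoc, seqPhiList_snoc, stepMean]
  ring

lemma IsFarthingale.horizonMean_eq {V : PreqFin → ℝ≥0∞} (hV : IsFarthingale V)
    (φ : ForecastingSystem) (n : ℕ) : horizonMean φ n V = V [] := by
  induction n with
  | zero => exact horizonMean_zero φ V
  | succ n ih =>
    rw [horizonMean_succ, ← ih, horizonMean]
    exact Finset.sum_congr rfl fun x _ => by rw [hV.stepMean_eq]

/-- The farthingale `V` frozen from the first time it reaches `c`. -/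
def stopAbove (V : PreqFin → ℝ≥0∞) (c : ℝ≥0∞) (y : PreqFin) : ℝ≥0∞ :=
  y.reverseRecOn (V []) fun x e s => if c ≤ s then s else V (x ++ [e])

@[simp] lemma stopAbove_nil (V : PreqFin → ℝ≥0∞) (c : ℝ≥0∞) : stopAbove V c [] = V [] := by
  unfold stopAbove; rw [List.reverseRecOn_nil]

lemma stopAbove_snoc (V : PreqFin → ℝ≥0∞) (c : ℝ≥0∞) (x : PreqFin) (e : I × Bool) :
    stopAbove V c (x ++ [e]) = if c ≤ stopAbove V c x then stopAbove V c x else V (x ++ [e]) := by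
  unfold stopAbove; rw [List.reverseRecOn_concat]

lemma stopAbove_eq_of_lt {V : PreqFin → ℝ≥0∞} {c : ℝ≥0∞} {y : PreqFin}
    (h : stopAbove V c y < c) : stopAbove V c y = V y := by
  induction y using List.reverseRecOn with
  | nil => exact stopAbove_nil V c
  | append_singleton x e _ =>
    rw [stopAbove_snoc] at h ⊢
    split_ifs at h ⊢ with hx
    · exact absurd h (not_lt.2 hx)
    · rfl

lemma le_stopAbove_append {V : PreqFin → ℝ≥0∞} {c : ℝ≥0∞} {x : PreqFin} (hx : c ≤ stopAbove V c x)
    (z : PreqFin) : c ≤ stopAbove V c (x ++ z) := by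
  induction z using List.reverseRecOn with
  | nil => simpa using hx
  | append_singleton z e ih => rw [← List.append_assoc, stopAbove_snoc, if_pos ih]; exact ih

lemma le_stopAbove_of_le_take {V : PreqFin → ℝ≥0∞} {c : ℝ≥0∞} {y : PreqFin} {m : ℕ}
    (h : c ≤ V (y.take m)) : c ≤ stopAbove V c y := by
  have hm : c ≤ stopAbove V c (y.take m) := by
    by_contra hlt
    exact hlt (stopAbove_eq_of_lt (not_le.1 hlt) ▸ h)
  simpa using le_stopAbove_append hm (y.drop m)

lemma isFarthingale_stopAbove {V : PreqFin → ℝ≥0∞} (hV : IsFarthingale V) (c : ℝ≥0∞) :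
    IsFarthingale (stopAbove V c) := by
  intro x p
  by_cases hx : c ≤ stopAbove V c x
  · exact (stepMean_const_of_snoc fun b => by rw [stopAbove_snoc, if_pos hx]).symm
  · rw [stopAbove_snoc, stopAbove_snoc, if_neg hx, if_neg hx, stopAbove_eq_of_lt (not_le.1 hx)]
    exact hV x p

end Farthingales

section Compensator

variable {S : PreqFin → ℝ≥0∞}

/-- Adding back the drift `S y - stepMean S y p` accumulated along the path turns a
superfarthingale `S` into a farthingale dominating it. -/
def compensate (S : PreqFin → ℝ≥0∞) (y : PreqFin) : ℝ≥0∞ :=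
  y.reverseRecOn (S []) fun x e v => S (x ++ [e]) + (v - stepMean S x e.1)

@[simp] lemma compensate_nil (S : PreqFin → ℝ≥0∞) : compensate S [] = S [] := by
  unfold compensate; rw [List.reverseRecOn_nil]

lemma compensate_snoc (S : PreqFin → ℝ≥0∞) (x : PreqFin) (e : I × Bool) :
    compensate S (x ++ [e]) = S (x ++ [e]) + (compensate S x - stepMean S x e.1) := by
  unfold compensate; rw [List.reverseRecOn_concat]

lemma le_compensate (y : PreqFin) : S y ≤ compensate S y := by
  induction y using List.reverseRecOn with
  | nil => simp
  | append_singleton x e _ => rw [compensate_snoc]; exact le_self_add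

lemma isFarthingale_compensate (hS : ∀ y p, stepMean S y p ≤ S y) :
    IsFarthingale (compensate S) := by
  intro x p
  have hle : stepMean S x p ≤ compensate S x := (hS x p).trans (le_compensate x)
  calc compensate S x = stepMean S x p + (compensate S x - stepMean S x p) :=
        (add_tsub_cancel_of_le hle).symm
    _ = bernProb p false * compensate S (x ++ [(p, false)])
          + bernProb p true * compensate S (x ++ [(p, true)]) := by
        rw [compensate_snoc, compensate_snoc, mul_add, mul_add, add_add_add_comm, ← add_mul,
          bernProb_false_add_true, one_mul, stepMean]

end Compensator

section Ville

variable {φ : ForecastingSystem} {μ : Measure BinSeq} {V : PreqFin → ℝ≥0∞}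

lemma IsForecastMeasure.mul_measure_hit_le (hμ : IsForecastMeasure φ μ) (hV : IsFarthingale V)
    (c : ℝ≥0∞) (n : ℕ) : c * μ {ω | ∃ m ≤ n, c ≤ V (prefixn (seqPhi φ ω) m)} ≤ V [] := by
  classical
  set Q : List Bool → Prop := fun x => ∃ m ≤ n, c ≤ V ((seqPhiList φ x).take m)
  have hset : {ω | ∃ m ≤ n, c ≤ V (prefixn (seqPhi φ ω) m)} = {ω | Q (bprefix ω n)} := by
    ext ω
    refine exists_congr fun m => and_congr_right fun hm => ?_
    rw [prefixn_seqPhi, take_seqPhiList, take_bprefix ω hm]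
  calc c * μ {ω | ∃ m ≤ n, c ≤ V (prefixn (seqPhi φ ω) m)}
      = ∑ x ∈ (boolStrings n).filter Q, c * cylProb φ x := by
        rw [hset, hμ.measure_setOf_bprefix, Finset.mul_sum]
    _ ≤ ∑ x ∈ (boolStrings n).filter Q, cylProb φ x * stopAbove V c (seqPhiList φ x) := by
        refine Finset.sum_le_sum fun x hx => ?_
        obtain ⟨m, -, hm⟩ := (Finset.mem_filter.1 hx).2
        rw [mul_comm]
        gcongr
        exact le_stopAbove_of_le_take hm
    _ ≤ horizonMean φ n (stopAbove V c) :=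
        Finset.sum_le_sum_of_subset (Finset.filter_subset _ _)
    _ = V [] := by rw [(isFarthingale_stopAbove hV c).horizonMean_eq, stopAbove_nil]

lemma IsForecastMeasure.measure_le_of_isFarthingale (hμ : IsForecastMeasure φ μ)
    (hV : IsFarthingale V) {E : Set PreqInf}
    (hE : ∀ π ∈ E, 1 ≤ limsup (fun n => V (prefixn π n)) atTop) :
    μ {ω | seqPhi φ ω ∈ E} ≤ V [] := by
  refine ENNReal.le_of_forall_lt_one_mul_le fun c hc => ?_
  set hit : ℕ → Set BinSeq := fun n => {ω | ∃ m ≤ n, c ≤ V (prefixn (seqPhi φ ω) m)}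
  have hsub : {ω | seqPhi φ ω ∈ E} ⊆ ⋃ n, hit n := by
    intro ω hω
    by_contra hnot
    simp only [hit, mem_iUnion, mem_ofPred_eq, not_exists, not_and, not_le] at hnot
    have hle : limsup (fun n => V (prefixn (seqPhi φ ω) n)) atTop ≤ c :=
      limsup_le_of_le (by isBoundedDefault) (Eventually.of_forall fun n => (hnot n n le_rfl).le)
    exact absurd ((hE _ hω).trans hle) (not_le.2 hc)
  have hmono : Monotone hit := fun m n hmn ω ⟨k, hk, hkc⟩ => ⟨k, hk.trans hmn, hkc⟩
  calc c * μ {ω | seqPhi φ ω ∈ E} ≤ c * μ (⋃ n, hit n) := by gcongr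
    _ = ⨆ n, c * μ (hit n) := by rw [hmono.measure_iUnion, ENNReal.mul_iSup]
    _ ≤ V [] := iSup_le fun n => hμ.mul_measure_hit_le hV c n

theorem upProbMeas_le_upProb (E : Set PreqInf) : UpProbMeas E ≤ UpProb E :=
  iSup₂_le fun _ _ => iSup_le fun hμ => le_sInf fun _ ⟨_, hV, hV0, hE⟩ =>
    hV0 ▸ hμ.measure_le_of_isFarthingale hV hE

end Ville

section Game

def prefixSet (K : Set PreqInf) (N : ℕ) : Set PreqFin :=
  {y | ∃ π ∈ K, ∀ i < N, y[i]? = some (π i)}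

lemma prefixn_mem_prefixSet {K : Set PreqInf} {π : PreqInf} (hπ : π ∈ K) {N n : ℕ} (h : N ≤ n) :
    prefixn π n ∈ prefixSet K N :=
  ⟨π, hπ, fun i hi => by simp [prefixn, hi.trans_le h]⟩

lemma snoc_mem_prefixSet_iff {K : Set PreqInf} {N : ℕ} {y : PreqFin} (h : N ≤ y.length)
    (e : I × Bool) : y ++ [e] ∈ prefixSet K N ↔ y ∈ prefixSet K N := by
  refine exists_congr fun π => and_congr_right fun _ => forall₂_congr fun i hi => ?_
  rw [List.getElem?_append_left (hi.trans_le h)]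

/-- Value of the game in which Forecaster, with `k` rounds to go, tries to keep the path
inside `prefixSet K N`. -/
def gameValueAux (K : Set PreqInf) (N : ℕ) : ℕ → PreqFin → ℝ≥0∞
  | 0 => (prefixSet K N).indicator 1
  | k + 1 => fun y => ⨆ p, stepMean (gameValueAux K N k) y p

def gameValue (K : Set PreqInf) (N : ℕ) (y : PreqFin) : ℝ≥0∞ := gameValueAux K N (N - y.length) y

variable {K : Set PreqInf} {N : ℕ}

lemma stepMean_le_one {V : PreqFin → ℝ≥0∞} (hV : ∀ y, V y ≤ 1) (y : PreqFin) (p : I) :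
    stepMean V y p ≤ 1 := by
  calc stepMean V y p ≤ bernProb p false * 1 + bernProb p true * 1 := by
        unfold stepMean; gcongr <;> exact hV _
    _ = 1 := by rw [mul_one, mul_one, bernProb_false_add_true]

lemma gameValueAux_le_one (k : ℕ) (y : PreqFin) : gameValueAux K N k y ≤ 1 := by
  induction k generalizing y with
  | zero => exact Set.indicator_le_self' (fun _ _ => zero_le_one) y
  | succ k ih => exact iSup_le fun p => stepMean_le_one ih y p

lemma gameValue_ne_top (y : PreqFin) : gameValue K N y ≠ ∞ :=
  ne_top_of_le_ne_top ENNReal.one_ne_top (gameValueAux_le_one _ y)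

lemma gameValue_of_le_length {y : PreqFin} (h : N ≤ y.length) :
    gameValue K N y = (prefixSet K N).indicator 1 y := by
  rw [gameValue, Nat.sub_eq_zero_of_le h, gameValueAux]

lemma gameValue_eq_iSup_stepMean (y : PreqFin) :
    gameValue K N y = ⨆ p, stepMean (gameValue K N) y p := by
  rcases lt_or_ge y.length N with h | h
  · have hk : N - y.length = N - (y.length + 1) + 1 := by omega
    rw [gameValue, hk, gameValueAux]
    simp [stepMean, gameValue]
  · classical
    have hconst : ∀ p, stepMean (gameValue K N) y p = gameValue K N y := fun p =>
      stepMean_const_of_snoc fun b => by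
        rw [gameValue_of_le_length h, gameValue_of_le_length (by simp; omega),
          Set.indicator_apply, Set.indicator_apply, snoc_mem_prefixSet_iff h, Pi.one_apply,
          Pi.one_apply]
    simp [hconst]

end Game

theorem upProb_le_gameValue (K : Set PreqInf) (N : ℕ) : UpProb K ≤ gameValue K N [] := by
  refine sInf_le ⟨compensate (gameValue K N),
    isFarthingale_compensate fun y p => (gameValue_eq_iSup_stepMean y).symm ▸ le_iSup _ p,
    compensate_nil _, fun π hπ => ?_⟩
  refine le_limsup_of_frequently_le (Eventually.frequently ?_) (by isBoundedDefault)
  filter_upwards [eventually_ge_atTop N] with n hn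
  refine le_trans ?_ (le_compensate _)
  rw [gameValue_of_le_length (by simpa [prefixn] using hn),
    Set.indicator_of_mem (prefixn_mem_prefixSet hπ hn), Pi.one_apply]

section NearOptimalForecasts

variable {K : Set PreqInf} {N : ℕ}

lemma exists_gameValue_le_stepMean_add (y : PreqFin) {δ : ℝ≥0∞} (hδ : δ ≠ 0) :
    ∃ p, gameValue K N y ≤ stepMean (gameValue K N) y p + δ := by
  rw [gameValue_eq_iSup_stepMean]
  exact exists_iSup_le_add (by rw [← gameValue_eq_iSup_stepMean]; exact gameValue_ne_top y) hδ

def strategyPath (q : PreqFin → I) (x : List Bool) : PreqFin :=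
  x.reverseRecOn [] fun _ b y => y ++ [(q y, b)]

/-- A strategy on prequential histories, turned into a forecasting system by replaying it along
the outcomes. -/
def strategyForecast (q : PreqFin → I) : ForecastingSystem := fun x => q (strategyPath q x)

lemma seqPhiList_strategyForecast (q : PreqFin → I) (x : List Bool) :
    seqPhiList (strategyForecast q) x = strategyPath q x := by
  induction x using List.reverseRecOn with
  | nil => unfold strategyPath; rw [List.reverseRecOn_nil]; rfl
  | append_singleton x b ih =>
    unfold strategyPath
    rw [List.reverseRecOn_concat, seqPhiList_snoc, ← strategyPath, ih]
    rfl

lemma horizonMean_le_succ_add {φ : ForecastingSystem} {G : PreqFin → ℝ≥0∞} {δ : ℝ≥0∞}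
    (h : ∀ x, G (seqPhiList φ x) ≤ stepMean G (seqPhiList φ x) (φ x) + δ) (n : ℕ) :
    horizonMean φ n G ≤ horizonMean φ (n + 1) G + δ := by
  calc horizonMean φ n G
      ≤ ∑ x ∈ boolStrings n, cylProb φ x * (stepMean G (seqPhiList φ x) (φ x) + δ) :=
        Finset.sum_le_sum fun x _ => by gcongr; exact h x
    _ = horizonMean φ (n + 1) G + δ := by
        simp only [horizonMean_succ, mul_add, Finset.sum_add_distrib, ← Finset.sum_mul,
          sum_cylProb_boolStrings, one_mul]

lemma exists_forecast_gameValue_le (K : Set PreqInf) (N : ℕ) {ε : ℝ≥0∞} (hε : ε ≠ 0) :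
    ∃ φ, gameValue K N [] ≤ horizonMean φ N (gameValue K N) + ε := by
  set δ := ε / N
  have hδ : δ ≠ 0 := (ENNReal.div_pos_iff.2 ⟨hε, ENNReal.natCast_ne_top N⟩).ne'
  choose q hq using fun y => exists_gameValue_le_stepMean_add (K := K) (N := N) y hδ
  set φ := strategyForecast q with hφ
  have hstep : ∀ x, gameValue K N (seqPhiList φ x)
      ≤ stepMean (gameValue K N) (seqPhiList φ x) (φ x) + δ := fun x => by
    rw [hφ, seqPhiList_strategyForecast]
    exact hq _
  have hn : ∀ n : ℕ, gameValue K N [] ≤ horizonMean φ n (gameValue K N) + n * δ := by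
    intro n
    induction n with
    | zero => simp
    | succ n ih =>
      calc gameValue K N [] ≤ horizonMean φ n (gameValue K N) + n * δ := ih
        _ ≤ horizonMean φ (n + 1) (gameValue K N) + δ + n * δ := by
            gcongr; exact horizonMean_le_succ_add hstep n
        _ = horizonMean φ (n + 1) (gameValue K N) + (n + 1 : ℕ) * δ := by push_cast; ring
  exact ⟨φ, (hn N).trans (by gcongr; exact ENNReal.mul_div_le)⟩

end NearOptimalForecasts

section Approximation

variable {K : Set PreqInf} {M : ℕ} {φ : ForecastingSystem}

def approxEvent (K : Set PreqInf) (M : ℕ) (φ : ForecastingSystem) : Set BinSeq :=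
  {ω | prefixn (seqPhi φ ω) M ∈ prefixSet K M}

def approxProb (K : Set PreqInf) (M : ℕ) (φ : ForecastingSystem) : ℝ≥0∞ :=
  horizonMean φ M ((prefixSet K M).indicator 1)

lemma mem_approxEvent_iff {ω : BinSeq} :
    ω ∈ approxEvent K M φ ↔ ∃ π ∈ K, ∀ i < M, π i = seqPhi φ ω i := by
  simp only [approxEvent, prefixSet, mem_ofPred_eq]
  exact exists_congr fun π => and_congr_right fun _ => forall₂_congr fun i hi => by
    simp [prefixn, hi, eq_comm]

lemma antitone_approxEvent : Antitone fun M => approxEvent K M φ := fun _ _ hMN _ hω =>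
  let ⟨π, hπ, h⟩ := mem_approxEvent_iff.1 hω
  mem_approxEvent_iff.2 ⟨π, hπ, fun i hi => h i (hi.trans_le hMN)⟩

lemma iInter_approxEvent_subset (hK : IsClosed K) (φ : ForecastingSystem) :
    ⋂ M, approxEvent K M φ ⊆ {ω | seqPhi φ ω ∈ K} := fun _ hω =>
  hK.mem_of_forall_exists_agree fun M => mem_approxEvent_iff.1 (mem_iInter.1 hω M)

lemma approxEvent_eq_setOf_bprefix :
    approxEvent K M φ = {ω | seqPhiList φ (bprefix ω M) ∈ prefixSet K M} := by
  simp only [approxEvent, prefixn_seqPhi]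

lemma measurableSet_approxEvent : MeasurableSet (approxEvent K M φ) := by
  rw [approxEvent_eq_setOf_bprefix]
  exact measurableSet_setOf_bprefix (seqPhiList φ · ∈ prefixSet K M) M

lemma IsForecastMeasure.measure_approxEvent {μ : Measure BinSeq} (hμ : IsForecastMeasure φ μ) :
    μ (approxEvent K M φ) = approxProb K M φ := by
  classical
  rw [approxEvent_eq_setOf_bprefix, hμ.measure_setOf_bprefix (seqPhiList φ · ∈ prefixSet K M),
    approxProb, horizonMean, Finset.sum_filter]
  refine Finset.sum_congr rfl fun x _ => ?_
  by_cases hx : seqPhiList φ x ∈ prefixSet K M <;> simp [hx]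

lemma horizonMean_gameValue (K : Set PreqInf) (N : ℕ) (φ : ForecastingSystem) :
    horizonMean φ N (gameValue K N) = approxProb K N φ :=
  Finset.sum_congr rfl fun x hx => by
    rw [gameValue_of_le_length (by simp [mem_boolStrings.1 hx])]

lemma antitone_approxProb (φ : ForecastingSystem) : Antitone (approxProb K · φ) := fun _ _ h => by
  simp only [← (isForecastMeasure_forecastMeasure φ).measure_approxEvent]
  exact measure_mono (antitone_approxEvent h)

lemma upperSemicontinuous_approxProb (hK : IsCompact K) (M : ℕ) :
    UpperSemicontinuous (approxProb K M) := by
  have hsum : approxProb K M = fun φ => ∑ x ∈ boolStrings M,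
      {φ | seqPhiList φ x ∈ prefixSet K M}.indicator (fun φ => cylProb φ x) φ := by
    ext φ
    refine Finset.sum_congr rfl fun x _ => ?_
    by_cases hx : seqPhiList φ x ∈ prefixSet K M <;> simp [hx]
  rw [hsum]
  refine upperSemicontinuous_sum fun x hx => IsClosed.upperSemicontinuous_indicator_of_continuous
    ?_ (continuous_cylProb x) fun _ => zero_le
  have hset : {φ | seqPhiList φ x ∈ prefixSet K M}
      = {φ | ∃ π ∈ K, ∀ i < M, π i = (φ (x.take i), x.getD i false)} := by
    ext φ
    refine exists_congr fun π => and_congr_right fun _ => forall₂_congr fun i hi => ?_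
    rw [getElem?_seqPhiList _ _ (by rwa [mem_boolStrings.1 hx]), Option.some_inj, eq_comm]
  rw [hset]
  exact hK.isClosed_setOf_exists_agree M fun i => by fun_prop

lemma le_approxProb_of_mapClusterPt (hK : IsCompact K) {φs : ℕ → ForecastingSystem}
    (hφ : MapClusterPt φ atTop φs) {a : ℝ≥0∞} (ha : ∀ N, a ≤ approxProb K N (φs N)) (M : ℕ) :
    a ≤ approxProb K M φ := by
  refine le_of_forall_gt fun y hy => ?_
  have hnear := upperSemicontinuous_approxProb hK M φ y hy
  obtain ⟨N, hlt, hN⟩ := ((hφ.frequently hnear).and_eventually (eventually_ge_atTop M)).exists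
  exact (ha N).trans_lt ((antitone_approxProb (φs N) hN).trans_lt hlt)

lemma iInf_approxProb_le_upProbMeas (hK : IsClosed K) (φ : ForecastingSystem) :
    ⨅ M, approxProb K M φ ≤ UpProbMeas K := by
  have hμ := isForecastMeasure_forecastMeasure φ
  calc ⨅ M, approxProb K M φ = forecastMeasure φ (⋂ M, approxEvent K M φ) := by
        rw [antitone_approxEvent.measure_iInter
          (fun _ => measurableSet_approxEvent.nullMeasurableSet) ⟨0, measure_ne_top _ _⟩]
        simp only [hμ.measure_approxEvent]
    _ ≤ forecastMeasure φ {ω | seqPhi φ ω ∈ K} := measure_mono (iInter_approxEvent_subset hK φ)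
    _ ≤ UpProbMeas K := le_iSup₂_of_le φ (forecastMeasure φ) (le_iSup_of_le hμ le_rfl)

end Approximation

theorem iInf_gameValue_le_upProbMeas {K : Set PreqInf} (hK : IsCompact K) :
    ⨅ N, gameValue K N [] ≤ UpProbMeas K := by
  refine ENNReal.le_of_forall_pos_le_add fun ε hε _ => ?_
  choose φs hφs using fun N => exists_forecast_gameValue_le K N (ε := ε) (by exact_mod_cast hε.ne')
  obtain ⟨φ, -, hφ⟩ := isCompact_univ.exists_mapClusterPt (f := atTop) (u := φs) (by simp)
  have hM : ∀ M, (⨅ N, gameValue K N []) - ε ≤ approxProb K M φ :=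
    le_approxProb_of_mapClusterPt hK hφ fun N => tsub_le_iff_right.2 <|
      (iInf_le _ N).trans ((hφs N).trans_eq (by rw [horizonMean_gameValue]))
  calc ⨅ N, gameValue K N [] ≤ (⨅ M, approxProb K M φ) + ε := tsub_le_iff_right.1 (le_iInf hM)
    _ ≤ UpProbMeas K + ε := by gcongr; exact iInf_approxProb_le_upProbMeas hK.isClosed φ

/-- For every compact subset K of the prequential space Π, upper game-theoretic
probability equals upper measure-theoretic probability. -/
theorem upProb_eq_upProbMeas_of_compact (K : Set PreqInf) (hK : IsCompact K) :
    UpProb K = UpProbMeas K :=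
  le_antisymm ((le_iInf (upProb_le_gameValue K)).trans (iInf_gameValue_le_upProbMeas hK))
    (upProbMeas_le_upProb K)
end
end
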